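/- arXiv:1106.3151 — 2 statements merged into one kernel-verified Lean document; each statement's English description precedes it below -/
import Mathlib

section
/- Let f : (ℂ^m, 0) → ℂ be a germ of a holomorphic function, and suppose u : (ℂ^r, 0) → (ℂ^m, 0) and v : (ℂ^s, 0) → (ℂ^m, 0) are germs of holomorphic maps with v(x^{[s]}) obtained from u by setting certain variables equal to each other (precisely: s < r and v(y) = u(ι(y)) for a linear 'duplication' map ι). If f ∘ u satisfies a nontrivial polynomial relation Σ_{r=0}^e δ_r · (f∘u)^r = 0 with holomorphic coefficients δ_r and δ_e ≢ 0, then by applying a partial derivative ∂^ν of minimal order (chosen so that some ∂^ν δ_r does not vanish identically after the substitution) and substituting, f ∘ v satisfies a nontrivial polynomial relation Σ_{r=0}^e δ̂_r · (f∘v)^r = 0 where each δ̂_r is a partial derivative of δ_r composed with ι. -/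
/-!
Let `k` be the least order such that some order-`k` coordinate derivative of some `δ j` does not
vanish identically along `ι` near `0`; it exists because `δ e` is analytic and not identically zero
near `ι 0 = 0`. At every point `ι y` near `0`, all `δ j` then vanish to order `k`, so in the
`k`-th derivative of `δ j * (f ∘ u) ^ j` at `ι y` every Leibniz term except
`(∂ᵏ δ j) * (f ∘ u) ^ j` vanishes. Differentiating the relation, which holds on a neighbourhood
of `ι y`, `k` times thus gives the relation for `f ∘ u ∘ ι`.
-/

open Filter Topology

variable {𝕜 : Type*} [NontriviallyNormedField 𝕜]
  {E : Type*} [NormedAddCommGroup E] [NormedSpace 𝕜 E]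
  {F : Type*} [NormedAddCommGroup F] [NormedSpace 𝕜 F]

theorem ContDiffAt.iteratedFDeriv_succ_apply_right' {f : E → F} {x : E} {n : ℕ}
    (hf : ContDiffAt 𝕜 (n + 1) f x) (m : Fin (n + 1) → E) :
    iteratedFDeriv 𝕜 (n + 1) f x m =
      iteratedFDeriv 𝕜 n (fun y => fderiv 𝕜 f y (m (Fin.last n))) x (Fin.init m) := by
  rw [_root_.iteratedFDeriv_succ_apply_right,
    show (fun y => fderiv 𝕜 f y (m (Fin.last n))) =
      ContinuousLinearMap.apply 𝕜 F (m (Fin.last n)) ∘ fderiv 𝕜 f from rfl,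
    ContinuousLinearMap.iteratedFDeriv_comp_left _ (hf.fderiv_right le_rfl) le_rfl]
  rfl

theorem ContDiffAt.iteratedFDeriv_fderiv_apply_eq_zero {g : E → F} {x : E} {n : ℕ}
    (hg : ContDiffAt 𝕜 (n + 1) g x) (h : iteratedFDeriv 𝕜 (n + 1) g x = 0) (v : E) :
    iteratedFDeriv 𝕜 n (fun y => fderiv 𝕜 g y v) x = 0 := by
  ext m
  simpa [h] using (hg.iteratedFDeriv_succ_apply_right' (Fin.snoc m v)).symm

theorem iteratedFDeriv_mul_eq_smul_of_forall_lt_eq_zero {g c : E → 𝕜} {x : E} {k : ℕ}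
    (hg : ContDiffAt 𝕜 k g x) (hc : ContDiffAt 𝕜 k c x)
    (hvan : ∀ i < k, iteratedFDeriv 𝕜 i g x = 0) :
    iteratedFDeriv 𝕜 k (fun y => g y * c y) x = c x • iteratedFDeriv 𝕜 k g x := by
  induction k generalizing g c with
  | zero => ext m; simp [mul_comm]
  | succ k ih =>
    ext m
    set v := m (Fin.last k)
    have hg' : ContDiffAt 𝕜 (k + 1) g x := by exact_mod_cast hg
    have hc' : ContDiffAt 𝕜 (k + 1) c x := by exact_mod_cast hc
    have hg0 : ContDiffAt 𝕜 k g x := hg.of_le (by simp)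
    have hc0 : ContDiffAt 𝕜 k c x := hc.of_le (by simp)
    have hdg : ContDiffAt 𝕜 k (fun y => fderiv 𝕜 g y v) x :=
      (hg'.fderiv_right le_rfl).clm_apply contDiffAt_const
    have hdc : ContDiffAt 𝕜 k (fun y => fderiv 𝕜 c y v) x :=
      (hc'.fderiv_right le_rfl).clm_apply contDiffAt_const
    have hleibniz : (fun y => fderiv 𝕜 (fun z => g z * c z) y v) =ᶠ[𝓝 x]
        fun y => fderiv 𝕜 g y v * c y + g y * fderiv 𝕜 c y v := by
      filter_upwards [hg'.eventually (by simp), hc'.eventually (by simp)] with y hgy hcy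
      rw [fderiv_fun_mul (hgy.differentiableAt (by simp)) (hcy.differentiableAt (by simp))]
      simp only [add_apply, smul_apply, smul_eq_mul]
      ring
    have hdg_van (i : ℕ) (hi : i < k) :
        iteratedFDeriv 𝕜 i (fun y => fderiv 𝕜 g y v) x = 0 :=
      (hg.of_le (by exact_mod_cast (by omega : i + 1 ≤ k + 1))).iteratedFDeriv_fderiv_apply_eq_zero
        (hvan (i + 1) (by omega)) v
    -- `∂ᵥ g` vanishes to order `k`, while `g * ∂ᵥ c` only sees `iteratedFDeriv 𝕜 k g x = 0`.
    rw [(hg'.mul hc').iteratedFDeriv_succ_apply_right' m,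
      hleibniz.iteratedFDeriv 𝕜 k |>.eq_of_nhds,
      fun_iteratedFDeriv_add_apply (hdg.mul hc0) (hg0.mul hdc),
      ih hdg hc0 hdg_van, ih hg0 hdc fun i hi => hvan i (by omega),
      hvan k (by omega)]
    simp only [smul_zero, add_zero, smul_apply, hg'.iteratedFDeriv_succ_apply_right' m]
    rfl

theorem AnalyticAt.eventually_eq_zero_of_iteratedFDeriv_eq_zero [CharZero 𝕜] [CompleteSpace F]
    {f : E → F} {x : E} (hf : AnalyticAt 𝕜 f x) (h : ∀ n, iteratedFDeriv 𝕜 n f x = 0) :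
    ∀ᶠ z in 𝓝 x, f z = 0 := by
  obtain ⟨p, r, hp⟩ := hf
  filter_upwards [hp.eventually_hasSum_sub] with z hz
  have hterm (n : ℕ) : p n (fun _ => z - x) = 0 := by
    have := hp.factorial_smul (z - x) n
    rw [h, zero_apply, ← Nat.cast_smul_eq_nsmul 𝕜, smul_eq_zero] at this
    exact this.resolve_left (Nat.cast_ne_zero.2 n.factorial_ne_zero)
  simp only [hterm] at hz
  exact hz.unique hasSum_zero

theorem ContinuousMultilinearMap.eq_zero_of_apply_single {ι : Type*} [Fintype ι] [DecidableEq ι]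
    {n : ℕ} (M : ContinuousMultilinearMap 𝕜 (fun _ : Fin n => ι → 𝕜) F)
    (h : ∀ p : Fin n → ι, M (fun i => Pi.single (p i) 1) = 0) : M = 0 := by
  refine toMultilinearMap_injective <| MultilinearMap.pi_ext fun p => MultilinearMap.ext fun c => ?_
  have hsingle :
      (fun i => Pi.single (p i) (c i)) = fun i => c i • (Pi.single (p i) 1 : ι → 𝕜) := by
    simp [← Pi.single_smul]
  simp [hsingle, M.map_smul_univ, h]

theorem sum_smul_iteratedFDeriv_eq_zero_of_sum_mul_eventuallyEq_zero {ι : Type*} {s : Finset ι}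
    {δ c : ι → E → 𝕜} {x : E} {k : ℕ}
    (hδ : ∀ j ∈ s, ContDiffAt 𝕜 k (δ j) x) (hc : ∀ j ∈ s, ContDiffAt 𝕜 k (c j) x)
    (hvan : ∀ j ∈ s, ∀ i < k, iteratedFDeriv 𝕜 i (δ j) x = 0)
    (hrel : (fun y => ∑ j ∈ s, δ j y * c j y) =ᶠ[𝓝 x] 0) :
    ∑ j ∈ s, c j x • iteratedFDeriv 𝕜 k (δ j) x = 0 :=
  calc ∑ j ∈ s, c j x • iteratedFDeriv 𝕜 k (δ j) x
      = ∑ j ∈ s, iteratedFDeriv 𝕜 k (fun y => δ j y * c j y) x :=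
        Finset.sum_congr rfl fun j hj =>
          (iteratedFDeriv_mul_eq_smul_of_forall_lt_eq_zero (hδ j hj) (hc j hj) (hvan j hj)).symm
    _ = iteratedFDeriv 𝕜 k (fun y => ∑ j ∈ s, δ j y * c j y) x :=
        (iteratedFDeriv_fun_sum_apply fun j hj => (hδ j hj).mul (hc j hj)).symm
    _ = 0 := by rw [(hrel.iteratedFDeriv 𝕜 k).eq_of_nhds, iteratedFDeriv_zero, Pi.zero_apply]

theorem step_down_relation_general (m r s : ℕ)
    (ι : (Fin s → ℂ) →ₗ[ℂ] (Fin r → ℂ))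
    (f : (Fin m → ℂ) → ℂ) (hf : AnalyticAt ℂ f 0)
    (u : (Fin r → ℂ) → (Fin m → ℂ)) (hu : AnalyticAt ℂ u 0) (hu0 : u 0 = 0)
    (e : ℕ) (δ : ℕ → (Fin r → ℂ) → ℂ) (hδ : ∀ j, AnalyticAt ℂ (δ j) 0)
    (hrel : ∀ᶠ x in 𝓝 (0 : Fin r → ℂ),
      ∑ j ∈ Finset.range (e + 1), δ j x * f (u x) ^ j = 0)
    (hne : ¬ ∀ᶠ x in 𝓝 (0 : Fin r → ℂ), δ e x = 0) :
    ∃ (k : ℕ) (dir : Fin k → Fin r),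
      (∃ j ≤ e, ¬ ∀ᶠ y in 𝓝 (0 : Fin s → ℂ),
        iteratedFDeriv ℂ k (δ j) (ι y) (fun i => Pi.single (dir i) 1) = 0) ∧
      ∀ᶠ y in 𝓝 (0 : Fin s → ℂ),
        ∑ j ∈ Finset.range (e + 1),
          iteratedFDeriv ℂ k (δ j) (ι y) (fun i => Pi.single (dir i) 1)
            * f (u (ι y)) ^ j = 0 := by
  classical
  have hF : AnalyticAt ℂ (fun x => f (u x)) 0 := (hu0 ▸ hf).comp hu
  have hι : Tendsto ι (𝓝 0) (𝓝 0) := by simpa using ι.continuous_of_finiteDimensional.tendsto 0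
  have hex : ∃ k, ∃ dir : Fin k → Fin r, ∃ j ≤ e, ¬ ∀ᶠ y in 𝓝 (0 : Fin s → ℂ),
      iteratedFDeriv ℂ k (δ j) (ι y) (fun i => Pi.single (dir i) 1) = 0 := by
    by_contra! hall
    refine hne ((hδ e).eventually_eq_zero_of_iteratedFDeriv_eq_zero fun k =>
      ContinuousMultilinearMap.eq_zero_of_apply_single _ fun dir => ?_)
    simpa using (hall k dir e le_rfl).self_of_nhds
  obtain ⟨dir, j, hj, hdir⟩ := Nat.find_spec hex
  have hmin : ∀ j ∈ Finset.range (e + 1), ∀ i < Nat.find hex,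
      ∀ᶠ y in 𝓝 (0 : Fin s → ℂ), iteratedFDeriv ℂ i (δ j) (ι y) = 0 := by
    intro j hj i hi
    have hdir' (dir' : Fin i → Fin r) : ∀ᶠ y in 𝓝 (0 : Fin s → ℂ),
        iteratedFDeriv ℂ i (δ j) (ι y) (fun t => Pi.single (dir' t) 1) = 0 := by
      by_contra h
      exact Nat.find_min hex hi ⟨dir', j, Finset.mem_range_succ_iff.1 hj, h⟩
    filter_upwards [eventually_all.2 hdir'] with y hy
    exact ContinuousMultilinearMap.eq_zero_of_apply_single _ hy
  have hlow := (eventually_all_finset _).2 fun j hj =>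
    (eventually_all_finite (Set.finite_lt_nat _)).2 (hmin j hj)
  have hnear := hι.eventually (hrel.eventually_nhds.and (hF.eventually_analyticAt.and
    ((eventually_all_finset (Finset.range (e + 1))).2 fun j _ => (hδ j).eventually_analyticAt)))
  refine ⟨Nat.find hex, dir, ⟨j, hj, hdir⟩, ?_⟩
  filter_upwards [hlow, hnear] with y hvan ⟨hrel_y, hF_y, hδ_y⟩
  have := sum_smul_iteratedFDeriv_eq_zero_of_sum_mul_eventuallyEq_zero
    (c := fun j x => f (u x) ^ j) (fun j hj => (hδ_y j hj).contDiffAt)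
    (fun j _ => (hF_y.pow j).contDiffAt) hvan hrel_y
  simpa [mul_comm] using congr($this fun i => Pi.single (dir i) 1)

/-- (The 'step-down' differentiation trick of Lemma `l:induction`.)
Let `f : (ℂ^m, 0) → ℂ` be holomorphic, `u : (ℂ^r, 0) → (ℂ^m, 0)` holomorphic, and
`v = u ∘ ι` for an injective linear 'duplication' map `ι : ℂ^s → ℂ^r` (`s < r`).  If
`f ∘ u` satisfies a nontrivial polynomial relation `∑ j δ_j · (f ∘ u)^j = 0` with
holomorphic coefficients `δ_j` and `δ_e ≢ 0`, then `f ∘ v` satisfies a nontrivial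
polynomial relation `∑ j δ̂_j · (f ∘ v)^j = 0`, where each `δ̂_j` is a (common) iterated
partial derivative of `δ_j` composed with `ι`. -/
theorem step_down_relation (m r s : ℕ) (hs : s < r)
    (ι : (Fin s → ℂ) →ₗ[ℂ] (Fin r → ℂ)) (hι : Function.Injective ι)
    (f : (Fin m → ℂ) → ℂ) (hf : AnalyticAt ℂ f 0)
    (u : (Fin r → ℂ) → (Fin m → ℂ)) (hu : AnalyticAt ℂ u 0) (hu0 : u 0 = 0)
    (e : ℕ) (δ : ℕ → (Fin r → ℂ) → ℂ) (hδ : ∀ j, AnalyticAt ℂ (δ j) 0)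
    (hrel : ∀ᶠ x in 𝓝 (0 : Fin r → ℂ),
      ∑ j ∈ Finset.range (e + 1), δ j x * f (u x) ^ j = 0)
    (hne : ¬ ∀ᶠ x in 𝓝 (0 : Fin r → ℂ), δ e x = 0) :
    ∃ (k : ℕ) (dir : Fin k → Fin r),
      (∃ j ≤ e, ¬ ∀ᶠ y in 𝓝 (0 : Fin s → ℂ),
        iteratedFDeriv ℂ k (δ j) (ι y) (fun i => Pi.single (dir i) 1) = 0) ∧
      ∀ᶠ y in 𝓝 (0 : Fin s → ℂ),
        ∑ j ∈ Finset.range (e + 1),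
          iteratedFDeriv ℂ k (δ j) (ι y) (fun i => Pi.single (dir i) 1)
            * f (u (ι y)) ^ j = 0 :=
  step_down_relation_general m r s ι f hf u hu hu0 e δ hδ hrel hne
end

section
/- Let h(Z̃, Ẑ) = (h_1(Z̃, Ẑ), h_2(Z̃, Ẑ)) : (ℂ^{N−k} × ℂ^k, 0) → (ℂ^{N−k} × ℂ^k, 0) be a germ of a biholomorphism mapping M̃ × ℂ^k into M̃' × ℂ^k, where M̃, M̃' ⊂ ℂ^{N−k} are germs of real-analytic generic submanifolds through 0 and M̃' is holomorphically nondegenerate. Then h_1 is independent of Ẑ, i.e., ∂h_1/∂Ẑ_j ≡ 0 for j = 1,...,k. -/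
open Filter Topology

/-- The Wirtinger derivative `∂ρ/∂Z_j` of a (real-differentiable) function
`ρ : ℂ^q → ℂ`. -/
noncomputable def wirt {q : ℕ} (j : Fin q) (ρ : (Fin q → ℂ) → ℂ) (z : Fin q → ℂ) : ℂ :=
  (fderiv ℝ ρ z (Pi.single j 1) - Complex.I * fderiv ℝ ρ z (Pi.single j Complex.I)) / 2

/-- `M ⊆ ℂ^q` is a real-analytic generic submanifold of codimension `d`. -/
def IsRAGeneric {q : ℕ} (M : Set (Fin q → ℂ)) (d : ℕ) : Prop :=
  ∀ p ∈ M, ∃ ρ : (Fin q → ℂ) → (Fin d → ℝ),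
    AnalyticAt ℝ ρ p ∧ (∀ᶠ z in 𝓝 p, (z ∈ M ↔ ρ z = 0)) ∧
    LinearIndependent ℂ
      (fun i : Fin d => fun j : Fin q => wirt j (fun z => ((ρ z i : ℝ) : ℂ)) p)

/-- A holomorphic vector field `a` (defined near `0`) is tangent to `M` near `0` if it
annihilates every real-analytic function vanishing on `M` near `0`, at points of `M`. -/
def HoloTangent {q : ℕ} (M : Set (Fin q → ℂ)) (a : (Fin q → ℂ) → (Fin q → ℂ)) : Prop :=
  ∀ ρ : (Fin q → ℂ) → ℂ, AnalyticAt ℝ ρ 0 → (∀ᶠ z in 𝓝 (0 : Fin q → ℂ), z ∈ M → ρ z = 0) →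
    ∀ᶠ z in 𝓝 (0 : Fin q → ℂ), z ∈ M → ∑ j, a z j * wirt j ρ z = 0

/-- `M` is holomorphically nondegenerate (at `0`): the only germ at `0` of a holomorphic
vector field tangent to `M` is the zero vector field. -/
def HoloNondeg {q : ℕ} (M : Set (Fin q → ℂ)) : Prop :=
  ∀ a : (Fin q → ℂ) → (Fin q → ℂ), AnalyticAt ℂ a 0 → HoloTangent M a →
    ∀ᶠ z in 𝓝 (0 : Fin q → ℂ), a z = 0

/-!
`M̃ × ℂ^k` and `M̃' × ℂ^k` are zero sets of submersions to `ℝ^d` and `h` maps the first into the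
second, so near `0` it maps it onto the second: after straightening the first submersion, the
second one vanishes on a linear subspace, so its differential is invertible on a complement.
The fields `∂/∂Ẑⱼ` are tangent to `M̃ × ℂ^k`, so for each small `c` the `ℂ^{N-k}`-component
`z ↦ (∂h₁/∂Ẑⱼ)(h⁻¹(z, c))` of their pushforward is a holomorphic vector field tangent to `M̃'`,
hence zero near `0`. The identity theorem makes these neighbourhoods uniform in `c`.
-/

open Asymptotics

open Complex in
theorem smul_eq_re_smul_add_im_smul_I_smul {E : Type*} [AddCommGroup E] [Module ℂ E]
    (c : ℂ) (w : E) :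
    c • w = c.re • w + c.im • (I • w) := by
  conv_lhs => rw [← re_add_im c]
  rw [add_smul, mul_smul, coe_smul, coe_smul]

section Wirtinger

variable {E : Type*} [NormedAddCommGroup E] [NormedSpace ℂ E]

open Complex

/-- `∂ρ(z)`, the `ℂ`-linear part of the real differential of `ρ` at `z`. -/
noncomputable def wirtDiff (ρ : E → ℂ) (z : E) : E →ₗ[ℂ] ℂ where
  toFun w := (fderiv ℝ ρ z w - I * fderiv ℝ ρ z (I • w)) / 2
  map_add' v w := by simp only [smul_add, map_add]; ring
  map_smul' c w := by
    have hI : I • (c • w) = c.re • (I • w) - c.im • w := by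
      rw [smul_comm, smul_eq_re_smul_add_im_smul_I_smul, smul_smul, I_mul_I, neg_one_smul,
        smul_neg, sub_eq_add_neg]
    rw [hI, smul_eq_re_smul_add_im_smul_I_smul c w]
    simp only [map_add, map_sub, map_smul, RingHom.id_apply, smul_eq_mul, real_smul]
    conv_rhs => rw [← re_add_im c]
    linear_combination (c.im * fderiv ℝ ρ z (I • w) / 2) * I_sq

theorem wirtDiff_apply (ρ : E → ℂ) (z w : E) :
    wirtDiff ρ z w = (fderiv ℝ ρ z w - I * fderiv ℝ ρ z (I • w)) / 2 := rfl

theorem wirtDiff_comp {E' : Type*} [NormedAddCommGroup E'] [NormedSpace ℂ E']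
    {ρ : E' → ℂ} {f : E → E'} {p : E} (hρ : DifferentiableAt ℝ ρ (f p))
    (hf : DifferentiableAt ℂ f p) (v : E) :
    wirtDiff (ρ ∘ f) p v = wirtDiff ρ (f p) (fderiv ℂ f p v) := by
  have hfd : fderiv ℝ (ρ ∘ f) p = (fderiv ℝ ρ (f p)).comp ((fderiv ℂ f p).restrictScalars ℝ) := by
    rw [fderiv_comp p hρ (hf.restrictScalars ℝ), hf.fderiv_restrictScalars ℝ]
  simp only [wirtDiff_apply, hfd, ContinuousLinearMap.comp_apply,
    ContinuousLinearMap.coe_restrictScalars', map_smul]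

theorem wirtDiff_eq_zero_of_eventually_eq_zero {ψ : E → ℂ} {p : E} (hψ : DifferentiableAt ℝ ψ p)
    {v : E} (h0 : ∀ᶠ ζ : ℂ in 𝓝 0, ψ (p + ζ • v) = 0) : wirtDiff ψ p v = 0 := by
  set line : ℂ → E := fun ζ => p + ζ • v
  have hline : HasFDerivAt line ((ContinuousLinearMap.id ℂ ℂ).smulRight v) 0 :=
    ((hasFDerivAt_id (0 : ℂ)).smul_const v).const_add p
  have hflat : fderiv ℝ (ψ ∘ line) 0 = 0 := by
    have h0' : ψ ∘ line =ᶠ[𝓝 0] fun _ => 0 := h0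
    rw [h0'.fderiv_eq, fderiv_const_apply]
  have := wirtDiff_comp (f := line) (by simpa [line] using hψ) hline.differentiableAt 1
  rw [hline.fderiv] at this
  simpa [line, wirtDiff_apply, hflat] using this.symm

theorem wirtDiff_single {q : ℕ} (ρ : (Fin q → ℂ) → ℂ) (z : Fin q → ℂ) (j : Fin q) :
    wirtDiff ρ z (Pi.single j 1) = wirt j ρ z := by
  rw [wirtDiff_apply, wirt, ← Pi.single_smul, smul_eq_mul, mul_one]

theorem wirtDiff_eq_sum_wirt {q : ℕ} (ρ : (Fin q → ℂ) → ℂ) (z w : Fin q → ℂ) :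
    wirtDiff ρ z w = ∑ l, w l * wirt l ρ z := by
  conv_lhs => rw [← Finset.univ_sum_single w]
  simp only [map_sum]
  refine Finset.sum_congr rfl fun l _ => ?_
  rw [← wirtDiff_single, ← smul_eq_mul, ← map_smul, ← Pi.single_smul, smul_eq_mul, mul_one]

end Wirtinger

section Submersion

variable {𝕜 : Type*} [NontriviallyNormedField 𝕜] {E F : Type*}
  [NormedAddCommGroup E] [NormedSpace 𝕜 E] [NormedAddCommGroup F] [NormedSpace 𝕜 F]

theorem HasFDerivAt.apply_eq_zero_of_eventually_eq_zero {f : E → F} {f' : E →L[𝕜] F} {x v : E}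
    (hf : HasFDerivAt f f' x) (h0 : ∀ᶠ t : 𝕜 in 𝓝 0, f (x + t • v) = 0) : f' v = 0 := by
  have hline : HasDerivAt (fun t : 𝕜 => x + t • v) v 0 := by
    simpa using ((hasDerivAt_id (0 : 𝕜)).smul_const v).const_add x
  have hcomp : HasDerivAt (fun t : 𝕜 => f (x + t • v)) (f' v) 0 := by
    have hf' : HasFDerivAt f f' (x + (0 : 𝕜) • v) := by simpa using hf
    exact hf'.comp_hasDerivAt 0 hline
  exact hcomp.unique ((hasDerivAt_const (0 : 𝕜) (0 : F)).congr_of_eventuallyEq h0)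

variable [CompleteSpace 𝕜] [FiniteDimensional 𝕜 F]

theorem HasStrictFDerivAt.eventually_eq_zero_imp_of_ker {w : E → F} {W U : E →L[𝕜] F}
    (hw : HasStrictFDerivAt w W 0) (hW : Function.Surjective W) (hU : Function.Surjective U)
    (hker : ∀ᶠ y in 𝓝 0, U y = 0 → w y = 0) :
    ∀ᶠ y in 𝓝 0, w y = 0 → U y = 0 := by
  obtain ⟨σ, hσ⟩ := U.exists_rightInverse_of_surjective (LinearMap.range_eq_top.2 hU)
  have hUσ : ∀ y, U (σ y) = y := fun y => congr($hσ y)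
  have hWker : ∀ k, U k = 0 → W k = 0 := fun k hk => by
    refine hw.hasFDerivAt.apply_eq_zero_of_eventually_eq_zero (x := 0) ?_
    have hline : Tendsto (fun t : 𝕜 => (0 : E) + t • k) (𝓝 0) (𝓝 0) := by
      simpa using (tendsto_id (x := 𝓝 (0 : 𝕜))).smul_const k
    filter_upwards [hline.eventually hker] with t ht
    exact ht (by simp [hk])
  set L : F →L[𝕜] F := W.comp σ
  have hWL : ∀ y, W y = L (U y) := fun y => by
    have := hWker (y - σ (U y)) (by simp [hUσ])
    rwa [map_sub, sub_eq_zero] at this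
  have hL : Function.Injective L := LinearMap.injective_iff_surjective.2 fun y => by
    obtain ⟨x, rfl⟩ := hW y
    exact ⟨U x, (hWL x).symm⟩
  set Le : F ≃L[𝕜] F := (LinearEquiv.ofInjectiveEndo (L : F →ₗ[𝕜] F) hL).toContinuousLinearEquiv
  -- comparing `w` at `y` and at the point `y - σ (U y)` of `ker U` gives `L (U y) = o(U y)` on
  -- the zero set of `w`, with `L` invertible
  set l := 𝓝 (0 : E) ⊓ 𝓟 {y | w y = 0}
  have hproj : Tendsto (fun y => y - σ (U y)) (𝓝 0) (𝓝 0) :=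
    (continuous_id.sub (σ.continuous.comp U.continuous)).tendsto' 0 0 (by simp)
  have hrem : (fun y => w y - w (y - σ (U y)) - W (σ (U y))) =o[𝓝 0] fun y => σ (U y) := by
    simpa only [Function.comp_def, id, sub_sub_cancel] using
      hw.isLittleO.comp_tendsto (tendsto_id.prodMk_nhds hproj)
  have hLU : (fun y => L (U y)) =o[l] fun y => U y := by
    refine IsLittleO.trans_isBigO (IsLittleO.of_neg_left ?_) (σ.isBigO_comp _ _)
    refine (hrem.mono inf_le_left).congr' ?_ EventuallyEq.rfl
    filter_upwards [inf_le_left (a := 𝓝 (0 : E)) (hproj.eventually hker),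
      mem_inf_of_right (mem_principal_self _)] with y hker' hy
    rw [hy, hker' (by simp [hUσ]), hWL, hUσ]
    simp
  have hUU : (fun y => U y) =o[l] fun y => U y := (Le.isBigO_comp_rev _ _).trans_isLittleO hLU
  have hzero : ∀ᶠ y in l, U y = 0 := by
    simpa using not_frequently.1 fun hfreq => isLittleO_irrefl hfreq hUU
  exact eventually_inf_principal.1 hzero

theorem HasStrictFDerivAt.eventually_eq_zero_imp_of_eventually_imp [CompleteSpace E]
    {u v : E → F} {U V : E →L[𝕜] F} (hu : HasStrictFDerivAt u U 0) (hv : HasStrictFDerivAt v V 0)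
    (hU : Function.Surjective U) (hV : Function.Surjective V) (hu0 : u 0 = 0)
    (huv : ∀ᶠ x in 𝓝 0, u x = 0 → v x = 0) :
    ∀ᶠ x in 𝓝 0, v x = 0 → u x = 0 := by
  obtain ⟨σ, hσ⟩ := U.exists_rightInverse_of_surjective (LinearMap.range_eq_top.2 hU)
  have hUσ : ∀ y, U (σ y) = y := fun y => congr($hσ y)
  -- `Φ` straightens `u` to its linearization: `U ∘ Φ = u`
  set Φ : E → E := fun x => x - σ (U x) + σ (u x)
  have hΦ : HasStrictFDerivAt Φ ((ContinuousLinearEquiv.refl 𝕜 E : E ≃L[𝕜] E) : E →L[𝕜] E) 0 := by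
    have := ((hasStrictFDerivAt_id 0).sub (σ.comp U).hasStrictFDerivAt).add
      (σ.hasStrictFDerivAt.comp 0 hu)
    convert this using 1
    · rfl
    · ext
      simp
  have hΦ0 : Φ 0 = 0 := by simp [Φ, hu0]
  have hUΦ : ∀ x, U (Φ x) = u x := by simp [Φ, hUσ]
  set Ψ := hΦ.localInverse Φ _ 0
  have hΨ : HasStrictFDerivAt Ψ ((ContinuousLinearEquiv.refl 𝕜 E : E ≃L[𝕜] E) : E →L[𝕜] E) 0 := by
    simpa [hΦ0] using hΦ.to_localInverse
  have hΨ0 : Ψ 0 = 0 := by simpa [hΦ0] using hΦ.localInverse_apply_image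
  have hΨt : Tendsto Ψ (𝓝 0) (𝓝 0) := by simpa [hΨ0] using hΨ.continuousAt.tendsto
  have hΦt : Tendsto Φ (𝓝 0) (𝓝 0) := by simpa [hΦ0] using hΦ.continuousAt.tendsto
  have hw : HasStrictFDerivAt (v ∘ Ψ) V 0 := by
    rw [← hΨ0] at hv
    simpa [Function.comp_def] using hv.comp 0 hΨ
  have hker : ∀ᶠ y in 𝓝 0, U y = 0 → (v ∘ Ψ) y = 0 := by
    filter_upwards [hΦ0 ▸ hΦ.eventually_right_inverse, hΨt.eventually huv] with y hy hvy hUy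
    exact hvy (by rw [← hUΦ, hy, hUy])
  filter_upwards [hΦ.eventually_left_inverse,
    hΦt.eventually (hw.eventually_eq_zero_imp_of_ker hV hU hker)] with x hx hwx hvx
  rw [← hUΦ]
  exact hwx (by simp [Ψ, hx, hvx])

end Submersion

theorem surjective_fderiv_of_eventually_comp_eq_id {𝕜 : Type*} [NontriviallyNormedField 𝕜]
    {E F : Type*} [NormedAddCommGroup E] [NormedSpace 𝕜 E] [NormedAddCommGroup F] [NormedSpace 𝕜 F]
    {f : E → F} {g : F → E} {y : F} (hf : DifferentiableAt 𝕜 f (g y))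
    (hg : DifferentiableAt 𝕜 g y) (hfg : ∀ᶠ z in 𝓝 y, f (g z) = z) :
    Function.Surjective (fderiv 𝕜 f (g y)) := fun w => by
  have hid : fderiv 𝕜 (f ∘ g) y = ContinuousLinearMap.id 𝕜 F := by
    have hfg' : f ∘ g =ᶠ[𝓝 y] id := hfg
    rw [hfg'.fderiv_eq, fderiv_id]
  rw [fderiv_comp y hf hg] at hid
  exact ⟨fderiv 𝕜 g y w, congr($hid w)⟩

theorem Filter.Eventually.eventually_slice_nhds {X Y : Type*} [TopologicalSpace X]
    [TopologicalSpace Y] {a : X} {b : Y} {P : X × Y → Prop} (h : ∀ᶠ x in 𝓝 (a, b), P x) :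
    ∀ᶠ c in 𝓝 b, ∀ᶠ z in 𝓝 a, P (z, c) := by
  rw [nhds_prod_eq, prod_comm] at h
  exact (eventually_map.1 h).curry

open Complex in
theorem surjective_fderiv_of_linearIndependent_wirt {q d : ℕ} {ρ : (Fin q → ℂ) → Fin d → ℝ}
    {z : Fin q → ℂ} (hρ : DifferentiableAt ℝ ρ z)
    (hind : LinearIndependent ℂ fun i j => wirt j (fun z => (ρ z i : ℂ)) z) :
    Function.Surjective (fderiv ℝ ρ z) := by
  set T := fderiv ℝ ρ z
  by_contra hT
  obtain ⟨φ, hφ, hker⟩ :=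
    (LinearMap.range (T : (Fin q → ℂ) →ₗ[ℝ] Fin d → ℝ)).exists_le_ker_of_lt_top
      (lt_top_iff_ne_top.2 fun h => hT (LinearMap.range_eq_top.1 h))
  set c : Fin d → ℝ := fun i => φ (Pi.single i 1)
  have hφ_eq : ∀ y, φ y = ∑ i, c i * y i := fun y => by
    conv_lhs => rw [← Finset.univ_sum_single y]
    refine (map_sum _ _ _).trans (Finset.sum_congr rfl fun i _ => ?_)
    rw [mul_comm, ← smul_eq_mul, ← map_smul, ← Pi.single_smul, smul_eq_mul, mul_one]
  have hφT : ∀ x, ∑ i, (c i : ℂ) * (T x i : ℂ) = 0 := fun x => by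
    exact_mod_cast (hφ_eq _).symm.trans (hker ⟨x, rfl⟩)
  have hwirt : ∀ i j, wirt j (fun z => (ρ z i : ℂ)) z
      = ((T (Pi.single j 1) i : ℂ) - I * T (Pi.single j I) i) / 2 := fun i j => by
    set ev := ofRealCLM.comp (ContinuousLinearMap.proj (R := ℝ) (φ := fun _ : Fin d => ℝ) i)
    have : HasFDerivAt (fun z => (ρ z i : ℂ)) (ev.comp T) z := ev.hasFDerivAt.comp z hρ.hasFDerivAt
    simp [wirt, this.fderiv, T, ev]
  have hc := Fintype.linearIndependent_iff.1 hind (fun i => (c i : ℂ)) <| funext fun j => by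
    simp only [Finset.sum_apply, Pi.smul_apply, hwirt, smul_eq_mul, Pi.zero_apply]
    calc ∑ i, (c i : ℂ) * ((T (Pi.single j 1) i - I * T (Pi.single j I) i) / 2)
        = (∑ i, (c i : ℂ) * T (Pi.single j 1) i
            - I * ∑ i, (c i : ℂ) * T (Pi.single j I) i) / 2 := by
          rw [Finset.mul_sum, ← Finset.sum_sub_distrib, Finset.sum_div]
          exact Finset.sum_congr rfl fun i _ => by ring
      _ = 0 := by simp [hφT]
  exact hφ (LinearMap.ext fun y => by simp [hφ_eq, fun i => ofReal_eq_zero.1 (hc i)])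

theorem IsRAGeneric.exists_hasStrictFDerivAt_surjective {q d : ℕ} {M : Set (Fin q → ℂ)}
    (hM : IsRAGeneric M d) {p : Fin q → ℂ} (hp : p ∈ M) :
    ∃ ρ : (Fin q → ℂ) → Fin d → ℝ, HasStrictFDerivAt ρ (fderiv ℝ ρ p) p ∧
      Function.Surjective (fderiv ℝ ρ p) ∧ ∀ᶠ z in 𝓝 p, z ∈ M ↔ ρ z = 0 := by
  obtain ⟨ρ, hρ, hMρ, hind⟩ := hM p hp
  exact ⟨ρ, (hρ.contDiffAt (n := 1)).hasStrictFDerivAt one_ne_zero,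
    surjective_fderiv_of_linearIndependent_wirt hρ.differentiableAt hind, hMρ⟩

theorem eventually_fst_mem_iff_of_isRAGeneric {q d : ℕ} {G₁ G₂ : Type*} [NormedAddCommGroup G₁]
    [NormedSpace ℝ G₁] [CompleteSpace G₁] [NormedAddCommGroup G₂] [NormedSpace ℝ G₂]
    {M1 M2 : Set (Fin q → ℂ)} (hM1 : IsRAGeneric M1 d) (hM2 : IsRAGeneric M2 d)
    (h0M1 : 0 ∈ M1) (h0M2 : 0 ∈ M2) {h : (Fin q → ℂ) × G₁ → (Fin q → ℂ) × G₂}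
    {D : (Fin q → ℂ) × G₁ →L[ℝ] (Fin q → ℂ) × G₂} (hh : HasStrictFDerivAt h D 0)
    (hD : Function.Surjective D) (hh0 : h 0 = 0)
    (hmap : ∀ᶠ p in 𝓝 0, p.1 ∈ M1 → (h p).1 ∈ M2) :
    ∀ᶠ p in 𝓝 0, p.1 ∈ M1 ↔ (h p).1 ∈ M2 := by
  obtain ⟨ρ1, hρ1, hT1, hM1ρ⟩ := hM1.exists_hasStrictFDerivAt_surjective h0M1
  obtain ⟨ρ2, hρ2, hT2, hM2ρ⟩ := hM2.exists_hasStrictFDerivAt_surjective h0M2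
  have hu : HasStrictFDerivAt (fun p : (Fin q → ℂ) × G₁ => ρ1 p.1)
      ((fderiv ℝ ρ1 0).comp (ContinuousLinearMap.fst ℝ _ _)) 0 :=
    hρ1.comp 0 hasStrictFDerivAt_fst
  have hh1 : HasStrictFDerivAt (fun p => (h p).1) ((ContinuousLinearMap.fst ℝ _ _).comp D) 0 :=
    hasStrictFDerivAt_fst.comp 0 hh
  have hv : HasStrictFDerivAt (fun p => ρ2 (h p).1)
      ((fderiv ℝ ρ2 0).comp ((ContinuousLinearMap.fst ℝ _ _).comp D)) 0 := by
    have hρ2' : HasStrictFDerivAt ρ2 (fderiv ℝ ρ2 0) (h 0).1 := by rw [hh0]; exact hρ2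
    exact hρ2'.comp 0 hh1
  have hfst : Tendsto Prod.fst (𝓝 (0 : (Fin q → ℂ) × G₁)) (𝓝 0) := continuous_fst.tendsto 0
  have hh1t : Tendsto (fun p => (h p).1) (𝓝 0) (𝓝 0) := by
    simpa [hh0] using hh1.continuousAt.tendsto
  have hM1' := hfst.eventually hM1ρ
  have hM2' := hh1t.eventually hM2ρ
  have hvu := hu.eventually_eq_zero_imp_of_eventually_imp hv (hT1.comp Prod.fst_surjective)
    (hT2.comp (Prod.fst_surjective.comp hD)) (hM1ρ.self_of_nhds.1 h0M1) <| by
      filter_upwards [hM1', hM2', hmap] with p h1 h2 h3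
      exact fun hp => h2.1 (h3 (h1.2 hp))
  filter_upwards [hM1', hM2', hmap, hvu] with p h1 h2 h3 h4
  exact ⟨h3, fun hp => h1.2 (h4 (h2.1 hp))⟩

theorem sum_fderiv_mul_wirt_eq_zero_of_eventually_eq_zero {q : ℕ} {E₁ E₂ : Type*}
    [NormedAddCommGroup E₁] [NormedSpace ℂ E₁] [NormedAddCommGroup E₂] [NormedSpace ℂ E₂]
    {f : E₁ × E₂ → Fin q → ℂ} {ρ : (Fin q → ℂ) → ℂ} {p : E₁ × E₂}
    (hf : DifferentiableAt ℂ f p) (hρ : DifferentiableAt ℝ ρ (f p))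
    (hvan : ∀ᶠ y in 𝓝 p, y.1 = p.1 → ρ (f y) = 0) (w : E₂) :
    ∑ l, fderiv ℂ f p (0, w) l * wirt l ρ (f p) = 0 := by
  rw [← wirtDiff_eq_sum_wirt, ← wirtDiff_comp hρ hf]
  refine wirtDiff_eq_zero_of_eventually_eq_zero (hρ.comp p (hf.restrictScalars ℝ)) ?_
  have hline : Tendsto (fun ζ : ℂ => p + ζ • ((0 : E₁), w)) (𝓝 0) (𝓝 p) := by
    simpa using ((continuous_id.smul (continuous_const (y := ((0 : E₁), w)))).const_add p).tendsto
      (0 : ℂ)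
  filter_upwards [hline.eventually hvan] with ζ hζ
  exact hζ (by simp)

theorem eventually_holoTangent_fderiv_slice {q : ℕ} {G : Type*} [NormedAddCommGroup G]
    [NormedSpace ℂ G] {M1 M2 : Set (Fin q → ℂ)} {h g : (Fin q → ℂ) × G → (Fin q → ℂ) × G}
    (hh : ∀ᶠ p in 𝓝 0, DifferentiableAt ℂ h p) (hg : ContinuousAt g 0) (hg0 : g 0 = 0)
    (hhg : ∀ᶠ x in 𝓝 0, h (g x) = x) (hiff : ∀ᶠ p in 𝓝 0, p.1 ∈ M1 ↔ (h p).1 ∈ M2) (w : G) :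
    ∀ᶠ c in 𝓝 (0 : G), HoloTangent M2 fun z => (fderiv ℂ h (g (z, c)) (0, w)).1 := by
  have hgt : Tendsto g (𝓝 0) (𝓝 0) := by simpa [hg0] using hg.tendsto
  have hgood : ∀ᶠ x in 𝓝 ((0 : Fin q → ℂ), (0 : G)), h (g x) = x ∧ DifferentiableAt ℂ h (g x) ∧
      ∀ᶠ y in 𝓝 (g x), (y.1 ∈ M1 ↔ (h y).1 ∈ M2) :=
    hhg.and (hgt.eventually (hh.and hiff.eventually_nhds))
  filter_upwards [hgood.eventually_slice_nhds] with c hc ρ hρ hρM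
  filter_upwards [hc, hρM.eventually_nhds, hρ.eventually_analyticAt]
    with z ⟨hhgz, hdiff, hloc⟩ hρMz hρz hz
  have hfst : (h (g (z, c))).1 = z := by rw [hhgz]
  have hcont : Tendsto (fun y => (h y).1) (𝓝 (g (z, c))) (𝓝 z) := by
    simpa [Function.comp_def, hfst] using
      (continuous_fst.continuousAt.comp hdiff.continuousAt).tendsto
  have hM1 : (g (z, c)).1 ∈ M1 := hloc.self_of_nhds.2 (by rwa [hfst])
  have := sum_fderiv_mul_wirt_eq_zero_of_eventually_eq_zero (f := fun y => (h y).1) hdiff.fst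
    (hfst ▸ hρz.differentiableAt) ?_ w
  · simpa [fderiv.fst hdiff, hfst] using this
  filter_upwards [hloc, hcont.eventually hρMz] with y hy hρy hy1
  exact hρy (hy.1 (hy1 ▸ hM1))

theorem eventually_eq_zero_of_eventually_slice_eq_zero {E G H : Type*} [NormedAddCommGroup E]
    [NormedSpace ℂ E] [NormedAddCommGroup G] [NormedSpace ℂ G] [NormedAddCommGroup H]
    [NormedSpace ℂ H] {F : E × G → H} {z₀ : E} {c₀ : G}
    (hF : ∀ᶠ x in 𝓝 (z₀, c₀), AnalyticAt ℂ F x)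
    (hslice : ∀ᶠ c in 𝓝 c₀, ∀ᶠ z in 𝓝 z₀, F (z, c) = 0) :
    ∀ᶠ x in 𝓝 (z₀, c₀), F x = 0 := by
  obtain ⟨r, hr, hball⟩ := Metric.eventually_nhds_iff_ball.1 hF
  -- the identity theorem on `ball z₀ r` makes the slices vanish on a ball of uniform radius
  have hc : ∀ᶠ c in 𝓝 c₀, ∀ z ∈ Metric.ball z₀ r, F (z, c) = 0 := by
    filter_upwards [hslice, Metric.ball_mem_nhds c₀ hr] with c hc hcr
    have han : AnalyticOnNhd ℂ (fun z => F (z, c)) (Metric.ball z₀ r) := fun z hz =>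
      (hball _ (by rw [← ball_prod_same]; exact ⟨hz, hcr⟩)).comp
        (analyticAt_id.prod analyticAt_const)
    exact fun z hz => han.eqOn_zero_of_preconnected_of_eventuallyEq_zero
      (convex_ball _ _).isPreconnected (Metric.mem_ball_self hr) hc hz
  rw [nhds_prod_eq]
  filter_upwards [Filter.Eventually.prod_mk (Metric.ball_mem_nhds z₀ hr) hc] with x ⟨hz, hc⟩
  exact hc x.1 hz

/-- Let `h = (h₁, h₂) : (ℂ^{N-k} × ℂ^k, 0) → (ℂ^{N-k} × ℂ^k, 0)` be a
germ of a biholomorphism mapping `M̃ × ℂ^k` into `M̃' × ℂ^k`, where `M̃, M̃'` are germs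
at `0` of real-analytic generic submanifolds of `ℂ^{N-k}` (of the same codimension) and
`M̃'` is holomorphically nondegenerate.  Then `h₁` is independent of `Ẑ`:
`∂h₁/∂Ẑ_j ≡ 0` near `0` for `j = 1, ..., k`. -/
theorem first_component_independent (q k d : ℕ)
    (M1 M2 : Set (Fin q → ℂ)) (h0M1 : (0 : Fin q → ℂ) ∈ M1) (h0M2 : (0 : Fin q → ℂ) ∈ M2)
    (hM1 : IsRAGeneric M1 d) (hM2 : IsRAGeneric M2 d) (hnd : HoloNondeg M2)
    (h : (Fin q → ℂ) × (Fin k → ℂ) → (Fin q → ℂ) × (Fin k → ℂ))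
    (hh : AnalyticAt ℂ h 0) (hh0 : h 0 = 0)
    (hinv : ∃ g : (Fin q → ℂ) × (Fin k → ℂ) → (Fin q → ℂ) × (Fin k → ℂ),
      AnalyticAt ℂ g 0 ∧ (∀ᶠ p in 𝓝 (0 : (Fin q → ℂ) × (Fin k → ℂ)), g (h p) = p) ∧
      (∀ᶠ p in 𝓝 (0 : (Fin q → ℂ) × (Fin k → ℂ)), h (g p) = p))
    (hmap : ∀ᶠ p : (Fin q → ℂ) × (Fin k → ℂ) in 𝓝 0, p.1 ∈ M1 → (h p).1 ∈ M2) :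
    ∀ j : Fin k, ∀ᶠ p : (Fin q → ℂ) × (Fin k → ℂ) in 𝓝 0,
      (fderiv ℂ h p ((0 : Fin q → ℂ), Pi.single j 1)).1 = 0 := by
  intro j
  obtain ⟨g, hg, hgh, hhg⟩ := hinv
  have hg0 : g 0 = 0 := by simpa [hh0] using hgh.self_of_nhds
  have hsurj : Function.Surjective (fderiv ℂ h 0) := by
    rw [← hg0] at hh ⊢
    exact surjective_fderiv_of_eventually_comp_eq_id hh.differentiableAt hg.differentiableAt hhg
  have hiff := eventually_fst_mem_iff_of_isRAGeneric hM1 hM2 h0M1 h0M2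
    (((hh.contDiffAt (n := 1)).hasStrictFDerivAt one_ne_zero).restrictScalars ℝ) hsurj hh0 hmap
  -- the pushforward of `∂/∂Ẑⱼ` by `h`, read in the coordinates `(z, c) = h p`
  set A : (Fin q → ℂ) × (Fin k → ℂ) → Fin q → ℂ :=
    fun x => (fderiv ℂ h (g x) ((0 : Fin q → ℂ), Pi.single j 1)).1
  have hA : ∀ᶠ x in 𝓝 0, AnalyticAt ℂ A x := by
    have hDh : AnalyticAt ℂ (fderiv ℂ h) (g 0) := by rw [hg0]; exact hh.fderiv
    set ev := (ContinuousLinearMap.fst ℂ (Fin q → ℂ) (Fin k → ℂ)).comp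
      (ContinuousLinearMap.apply ℂ _ ((0 : Fin q → ℂ), (Pi.single j 1 : Fin k → ℂ)))
    exact ((ev.analyticAt _).comp (hDh.comp hg)).eventually_analyticAt
  have hslice : ∀ᶠ c in 𝓝 0, ∀ᶠ z in 𝓝 0, A (z, c) = 0 := by
    filter_upwards [eventually_holoTangent_fderiv_slice
        (hh.eventually_analyticAt.mono fun _ hp => hp.differentiableAt) hg.continuousAt hg0 hhg
        hiff _, hA.eventually_slice_nhds] with c htan han
    exact hnd _ (han.self_of_nhds.comp (f := fun z => (z, c))
      (analyticAt_id.prod analyticAt_const)) htan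
  have hht : Tendsto h (𝓝 0) (𝓝 0) := by simpa [hh0] using hh.continuousAt.tendsto
  filter_upwards [hgh, hht.eventually (eventually_eq_zero_of_eventually_slice_eq_zero hA hslice)]
    with p hp hAp
  simpa [A, hp] using hAp
end
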